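/- Let n and g be natural numbers with g ≥ 1, and let A, B ⊆ {0, 1, …, n−1} be finite sets. Let C be the (finite) set of consecutive occurrences (i, j) of (A, B) with distance j − i ≥ g. Then |C| · g ≤ n. In particular, there are at most n/g consecutive occurrences of distance at least g. -/

import Mathlib

/-
The half-open intervals `[i, j)` spanned by consecutive occurrences are pairwise disjoint: an
occurrence starting inside `[i, j)` would put an element of `A` strictly between `i` and `j`, and
two occurrences starting at the same `i` must end at the same `j`. These intervals lie in
`[0, n)`, so at most `n / g` of them can have length at least `g`.
-/

/-- `(i, j)` is a consecutive occurrence of `(A, B)`: `i ∈ A`, `j ∈ B`, `i < j`,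
and no `k ∈ A ∪ B` lies strictly between `i` and `j`. -/
def ConsecOcc (A B : Finset ℕ) (i j : ℕ) : Prop :=
  i ∈ A ∧ j ∈ B ∧ i < j ∧ ∀ k ∈ A ∪ B, ¬(i < k ∧ k < j)

theorem Finset.card_mul_le_card_of_pairwiseDisjoint {ι α : Type*} [DecidableEq α]
    {C : Finset ι} {s : ι → Finset α} {t : Finset α} {g : ℕ}
    (hdisj : (C : Set ι).PairwiseDisjoint s) (hsub : ∀ p ∈ C, s p ⊆ t)
    (hcard : ∀ p ∈ C, g ≤ (s p).card) :
    C.card * g ≤ t.card :=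
  calc C.card * g = ∑ _ ∈ C, g := by rw [Finset.sum_const, smul_eq_mul]
    _ ≤ ∑ p ∈ C, (s p).card := Finset.sum_le_sum hcard
    _ = (C.biUnion s).card := (Finset.card_biUnion hdisj).symm
    _ ≤ t.card := Finset.card_le_card (Finset.biUnion_subset.2 hsub)

namespace ConsecOcc

variable {A B : Finset ℕ} {i j i' j' : ℕ}

theorem le_of_lt_left (h : ConsecOcc A B i j) (h' : ConsecOcc A B i' j') (hi : i < i') :
    j ≤ i' :=
  not_lt.1 fun hj => h.2.2.2 i' (Finset.mem_union_left _ h'.1) ⟨hi, hj⟩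

theorem right_unique (h : ConsecOcc A B i j) (h' : ConsecOcc A B i j') : j = j' := by
  by_contra hne
  rcases Nat.lt_or_gt_of_ne hne with hlt | hlt
  · exact h'.2.2.2 j (Finset.mem_union_right _ h.2.1) ⟨h.2.2.1, hlt⟩
  · exact h.2.2.2 j' (Finset.mem_union_right _ h'.2.1) ⟨h'.2.2.1, hlt⟩

theorem disjoint_Ico_of_lt_left (h : ConsecOcc A B i j) (h' : ConsecOcc A B i' j')
    (hi : i < i') : Disjoint (Finset.Ico i j) (Finset.Ico i' j') :=
  (Finset.Ico_disjoint_Ico_consecutive i j j').mono_right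
    (Finset.Ico_subset_Ico_left (h.le_of_lt_left h' hi))

theorem disjoint_Ico (h : ConsecOcc A B i j) (h' : ConsecOcc A B i' j')
    (hne : (i, j) ≠ (i', j')) : Disjoint (Finset.Ico i j) (Finset.Ico i' j') := by
  rcases lt_trichotomy i i' with hlt | rfl | hgt
  · exact h.disjoint_Ico_of_lt_left h' hlt
  · exact absurd (by rw [h.right_unique h']) hne
  · exact (h'.disjoint_Ico_of_lt_left h hgt).symm

end ConsecOcc

theorem card_consecOcc_large_distance_general (n g : ℕ) (A B : Finset ℕ)
    (hB : B ⊆ Finset.range n)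
    (C : Finset (ℕ × ℕ))
    (hC : ∀ p : ℕ × ℕ, p ∈ C ↔ ConsecOcc A B p.1 p.2 ∧ g ≤ p.2 - p.1) :
    C.card * g ≤ n := by
  have hdisj : (C : Set (ℕ × ℕ)).PairwiseDisjoint fun p => Finset.Ico p.1 p.2 :=
    fun p hp q hq hne => ((hC p).1 hp).1.disjoint_Ico ((hC q).1 hq).1 hne
  have hsub : ∀ p ∈ C, Finset.Ico p.1 p.2 ⊆ Finset.range n := fun p hp x hx => by
    have hj := Finset.mem_range.1 (hB ((hC p).1 hp).1.2.1)
    simp only [Finset.mem_Ico, Finset.mem_range] at hx ⊢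
    omega
  have hcard : ∀ p ∈ C, g ≤ (Finset.Ico p.1 p.2).card := fun p hp => by
    simpa only [Nat.card_Ico] using ((hC p).1 hp).2
  simpa using Finset.card_mul_le_card_of_pairwiseDisjoint hdisj hsub hcard

/-- If `A, B ⊆ {0, …, n−1}` and `C` is the set of consecutive occurrences `(i, j)` of
`(A, B)` with distance `j − i ≥ g` (where `g ≥ 1`), then `|C| · g ≤ n`; in particular
there are at most `n / g` consecutive occurrences of distance at least `g`. -/
theorem card_consecOcc_large_distance (n g : ℕ) (hg : 1 ≤ g) (A B : Finset ℕ)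
    (hA : A ⊆ Finset.range n) (hB : B ⊆ Finset.range n)
    (C : Finset (ℕ × ℕ))
    (hC : ∀ p : ℕ × ℕ, p ∈ C ↔ ConsecOcc A B p.1 p.2 ∧ g ≤ p.2 - p.1) :
    C.card * g ≤ n :=
  card_consecOcc_large_distance_general n g A B hB C hC
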